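/- Let K₁, K₂, K₃ be three normalized circle quadruples with U ≠ 0, let t ∈ ℝ, set D = (1/4)·U·(1−t²) + Q₁Q₂Q₃·t², assume D ≥ 0, and let ε ∈ {1,−1}. Define a₀ = (t·(a₁v₂+a₂v₃+a₃v₁) + ε·Δ₄·√D)/U, b₀ = (t·(b₁v₂+b₂v₃+b₃v₁) + ε·Δ₂·√D)/U, c₀ = (t·(c₁v₂+c₂v₃+c₃v₁) + ε·Δ₃·√D)/U, d₀ = (t·(d₁v₂+d₂v₃+d₃v₁) + ε·Δ₁·√D)/U. Then b₀² + c₀² − a₀d₀ = 1, and for each i ∈ {1,2,3}: 2b₀b_i + 2c₀c_i − a₀d_i − a_id₀ = 2t (i.e., the circle K₀ = (a₀,b₀,c₀,d₀) meets each given circle at the same angle Ψ₀ with cos Ψ₀ = t: the isogonal Apollonius solution). -/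

import Mathlib

/-!
Write `⟪K, L⟫` for the polarisation of `b² + c² − a d`, so that `⟪K, K⟫ = 1` for a normalized
quadruple and `⟪Kᵢ, Kⱼ⟫ = 1 − 2 Q(Kᵢ, Kⱼ)`. The candidate is `K₀ = U⁻¹ (t W + s N)` with
`s = ε √D`, `W = v₂ K₁ + v₃ K₂ + v₁ K₃` in the span of the `Kᵢ` and `N = (Δ₄, Δ₂, Δ₃, Δ₁)`
orthogonal to all of them, since `⟪N, X⟫` is half the `4 × 4` determinant with rows
`X, K₁, K₂, K₃`.

The Gram matrix `G` of the `Kᵢ` has determinant `−4 U` and sends the weights `(v₂, v₃, v₁)` to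
`(U, U, U)`. Hence `⟪W, Kᵢ⟫ = U`, `⟪W, W⟫ = U (v₁ + v₂ + v₃) = U (U − 4 Q₁ Q₂ Q₃)` and, by a
Cauchy–Binet type identity, `⟪N, N⟫ = −det G = 4 U`. So `⟪K₀, Kᵢ⟫ = t`, and
`U² ⟪K₀, K₀⟫ = t² U (U − 4 Q₁ Q₂ Q₃) + 4 U s²`, which is `U²` precisely because `s² = D`.
-/

open Matrix

noncomputable def inversiveForm : LinearMap.BilinForm ℝ (Fin 4 → ℝ) :=
  LinearMap.mk₂ ℝ (fun K L => K 1 * L 1 + K 2 * L 2 - (K 0 * L 3 + K 3 * L 0) / 2)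
    (fun _ _ _ => by simp only [Pi.add_apply]; ring)
    (fun _ _ _ => by simp only [Pi.smul_apply, smul_eq_mul]; ring)
    (fun _ _ _ => by simp only [Pi.add_apply]; ring)
    (fun _ _ _ => by simp only [Pi.smul_apply, smul_eq_mul]; ring)

theorem inversiveForm_apply (K L : Fin 4 → ℝ) :
    inversiveForm K L = K 1 * L 1 + K 2 * L 2 - (K 0 * L 3 + K 3 * L 0) / 2 := rfl

theorem inversiveForm_vecCons (a b c d a' b' c' d' : ℝ) :
    inversiveForm ![a, b, c, d] ![a', b', c', d'] = b * b' + c * c' - (a * d' + d * a') / 2 :=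
  rfl

theorem inversiveForm_comm (K L : Fin 4 → ℝ) : inversiveForm K L = inversiveForm L K := by
  simp only [inversiveForm_apply]; ring

/-- Its components are the paper's `(Δ₄, Δ₂, Δ₃, Δ₁)` for the triple `K, L, M`. -/
noncomputable def inversiveCross (K L M : Fin 4 → ℝ) : Fin 4 → ℝ :=
  ![det !![K 0, K 1, K 2; L 0, L 1, L 2; M 0, M 1, M 2],
    -(1/2) * det !![K 0, K 2, K 3; L 0, L 2, L 3; M 0, M 2, M 3],
    (1/2) * det !![K 0, K 1, K 3; L 0, L 1, L 3; M 0, M 1, M 3],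
    -det !![K 1, K 2, K 3; L 1, L 2, L 3; M 1, M 2, M 3]]

theorem inversiveForm_inversiveCross (K L M X : Fin 4 → ℝ) :
    inversiveForm (inversiveCross K L M) X = det (Matrix.of ![X, K, L, M]) / 2 := by
  rw [det_succ_row_zero]
  simp only [inversiveCross, Fin.isValue, det_fin_three, of_apply, cons_val', cons_val_zero,
    cons_val_fin_one, cons_val_one, cons_val, inversiveForm_apply, submatrix_apply, Fin.succAbove,
    Fin.sum_univ_succ, Fin.succ_zero_eq_one, Fin.succ_one_eq_two, Fin.castSucc_zero,
    Fin.castSucc_one, Fin.reduceSucc, Fin.reduceCastSucc, Fin.coe_ofNat_eq_mod, Fin.val_succ,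
    Fin.succ_pos, Fin.lt_one_iff, Fin.reduceEq, Fin.reduceLT, Finset.univ_unique,
    Fin.default_eq_zero, Fin.val_eq_zero, Finset.sum_singleton, lt_self_iff_false, not_lt_zero,
    ↓reduceIte]
  ring

theorem inversiveForm_inversiveCross_first (K L M : Fin 4 → ℝ) :
    inversiveForm (inversiveCross K L M) K = 0 := by
  rw [inversiveForm_inversiveCross, det_zero_of_row_eq (i := 0) (j := 1) (by decide) rfl,
    zero_div]

theorem inversiveForm_inversiveCross_second (K L M : Fin 4 → ℝ) :
    inversiveForm (inversiveCross K L M) L = 0 := by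
  rw [inversiveForm_inversiveCross, det_zero_of_row_eq (i := 0) (j := 2) (by decide) rfl,
    zero_div]

theorem inversiveForm_inversiveCross_third (K L M : Fin 4 → ℝ) :
    inversiveForm (inversiveCross K L M) M = 0 := by
  rw [inversiveForm_inversiveCross, det_zero_of_row_eq (i := 0) (j := 3) (by decide) rfl,
    zero_div]

theorem inversiveForm_inversiveCross_self (K L M : Fin 4 → ℝ) :
    inversiveForm (inversiveCross K L M) (inversiveCross K L M) =
      -det !![inversiveForm K K, inversiveForm K L, inversiveForm K M;
              inversiveForm L K, inversiveForm L L, inversiveForm L M;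
              inversiveForm M K, inversiveForm M L, inversiveForm M M] := by
  simp only [inversiveCross, Fin.isValue, det_fin_three, of_apply, cons_val', cons_val_zero,
    cons_val_fin_one, cons_val_one, cons_val, inversiveForm_apply]
  ring

/-- The paper's `U`. -/
def apolloniusU (Q₁ Q₂ Q₃ : ℝ) : ℝ :=
  Q₁ * (Q₁ - 2 * Q₂) + Q₂ * (Q₂ - 2 * Q₃) + Q₃ * (Q₃ - 2 * Q₁) + 4 * Q₁ * Q₂ * Q₃

/-- The paper's `v₁ = apolloniusWeight Q₁ Q₂ Q₃`, `v₂ = apolloniusWeight Q₂ Q₃ Q₁`,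
`v₃ = apolloniusWeight Q₃ Q₁ Q₂`. -/
def apolloniusWeight (Q₁ Q₂ Q₃ : ℝ) : ℝ := Q₁ * (Q₁ - Q₂ - Q₃)

theorem apolloniusU_rotate (Q₁ Q₂ Q₃ : ℝ) : apolloniusU Q₂ Q₃ Q₁ = apolloniusU Q₁ Q₂ Q₃ := by
  unfold apolloniusU; ring

theorem apolloniusWeight_gram_row (Q₁ Q₂ Q₃ : ℝ) :
    apolloniusWeight Q₂ Q₃ Q₁ + (1 - 2 * Q₁) * apolloniusWeight Q₃ Q₁ Q₂
      + (1 - 2 * Q₃) * apolloniusWeight Q₁ Q₂ Q₃ = apolloniusU Q₁ Q₂ Q₃ := by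
  unfold apolloniusWeight apolloniusU; ring

theorem apolloniusWeight_sum (Q₁ Q₂ Q₃ : ℝ) :
    apolloniusWeight Q₂ Q₃ Q₁ + apolloniusWeight Q₃ Q₁ Q₂ + apolloniusWeight Q₁ Q₂ Q₃
      = apolloniusU Q₁ Q₂ Q₃ - 4 * Q₁ * Q₂ * Q₃ := by
  unfold apolloniusWeight apolloniusU; ring

theorem det_gram_eq_apolloniusU (Q₁ Q₂ Q₃ : ℝ) :
    det !![1, 1 - 2 * Q₁, 1 - 2 * Q₃; 1 - 2 * Q₁, 1, 1 - 2 * Q₂; 1 - 2 * Q₃, 1 - 2 * Q₂, 1]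
      = -4 * apolloniusU Q₁ Q₂ Q₃ := by
  simp only [det_fin_three, Fin.isValue, of_apply, cons_val', cons_val_zero, cons_val_fin_one,
    cons_val_one, cons_val, apolloniusU]
  ring

noncomputable def apolloniusPoint (Q₁ Q₂ Q₃ : ℝ) (K₁ K₂ K₃ : Fin 4 → ℝ) : Fin 4 → ℝ :=
  apolloniusWeight Q₂ Q₃ Q₁ • K₁ + apolloniusWeight Q₃ Q₁ Q₂ • K₂ + apolloniusWeight Q₁ Q₂ Q₃ • K₃

theorem apolloniusPoint_rotate (Q₁ Q₂ Q₃ : ℝ) (K₁ K₂ K₃ : Fin 4 → ℝ) :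
    apolloniusPoint Q₂ Q₃ Q₁ K₂ K₃ K₁ = apolloniusPoint Q₁ Q₂ Q₃ K₁ K₂ K₃ := by
  unfold apolloniusPoint; abel

section Gram

variable {K₁ K₂ K₃ : Fin 4 → ℝ} {Q₁ Q₂ Q₃ : ℝ}

theorem inversiveForm_apolloniusPoint_first (h₁ : inversiveForm K₁ K₁ = 1)
    (hQ₁ : inversiveForm K₁ K₂ = 1 - 2 * Q₁) (hQ₃ : inversiveForm K₃ K₁ = 1 - 2 * Q₃) :
    inversiveForm (apolloniusPoint Q₁ Q₂ Q₃ K₁ K₂ K₃) K₁ = apolloniusU Q₁ Q₂ Q₃ := by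
  simp only [apolloniusPoint, map_add, map_smul, LinearMap.add_apply, LinearMap.smul_apply,
    smul_eq_mul]
  rw [inversiveForm_comm K₂, h₁, hQ₁, hQ₃, ← apolloniusWeight_gram_row]
  ring

theorem inversiveForm_apolloniusPoint_second (h₂ : inversiveForm K₂ K₂ = 1)
    (hQ₁ : inversiveForm K₁ K₂ = 1 - 2 * Q₁) (hQ₂ : inversiveForm K₂ K₃ = 1 - 2 * Q₂) :
    inversiveForm (apolloniusPoint Q₁ Q₂ Q₃ K₁ K₂ K₃) K₂ = apolloniusU Q₁ Q₂ Q₃ := by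
  rw [← apolloniusPoint_rotate, ← apolloniusU_rotate]
  exact inversiveForm_apolloniusPoint_first h₂ hQ₂ hQ₁

theorem inversiveForm_apolloniusPoint_third (h₃ : inversiveForm K₃ K₃ = 1)
    (hQ₂ : inversiveForm K₂ K₃ = 1 - 2 * Q₂) (hQ₃ : inversiveForm K₃ K₁ = 1 - 2 * Q₃) :
    inversiveForm (apolloniusPoint Q₁ Q₂ Q₃ K₁ K₂ K₃) K₃ = apolloniusU Q₁ Q₂ Q₃ := by
  rw [← apolloniusPoint_rotate, ← apolloniusPoint_rotate, ← apolloniusU_rotate,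
    ← apolloniusU_rotate]
  exact inversiveForm_apolloniusPoint_first h₃ hQ₃ hQ₂

theorem inversiveForm_apolloniusPoint_self (h₁ : inversiveForm K₁ K₁ = 1)
    (h₂ : inversiveForm K₂ K₂ = 1) (h₃ : inversiveForm K₃ K₃ = 1)
    (hQ₁ : inversiveForm K₁ K₂ = 1 - 2 * Q₁) (hQ₂ : inversiveForm K₂ K₃ = 1 - 2 * Q₂)
    (hQ₃ : inversiveForm K₃ K₁ = 1 - 2 * Q₃) :
    inversiveForm (apolloniusPoint Q₁ Q₂ Q₃ K₁ K₂ K₃) (apolloniusPoint Q₁ Q₂ Q₃ K₁ K₂ K₃)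
      = apolloniusU Q₁ Q₂ Q₃ * (apolloniusU Q₁ Q₂ Q₃ - 4 * Q₁ * Q₂ * Q₃) := by
  conv_lhs => arg 2; rw [apolloniusPoint]
  rw [map_add, map_add, map_smul, map_smul, map_smul,
    inversiveForm_apolloniusPoint_first h₁ hQ₁ hQ₃,
    inversiveForm_apolloniusPoint_second h₂ hQ₁ hQ₂,
    inversiveForm_apolloniusPoint_third h₃ hQ₂ hQ₃, ← apolloniusWeight_sum]
  simp only [smul_eq_mul]
  ring

theorem inversiveForm_inversiveCross_apolloniusPoint :
    inversiveForm (inversiveCross K₁ K₂ K₃) (apolloniusPoint Q₁ Q₂ Q₃ K₁ K₂ K₃) = 0 := by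
  simp only [apolloniusPoint, map_add, map_smul, inversiveForm_inversiveCross_first,
    inversiveForm_inversiveCross_second, inversiveForm_inversiveCross_third, smul_zero, add_zero]

theorem inversiveForm_inversiveCross_self_eq (h₁ : inversiveForm K₁ K₁ = 1)
    (h₂ : inversiveForm K₂ K₂ = 1) (h₃ : inversiveForm K₃ K₃ = 1)
    (hQ₁ : inversiveForm K₁ K₂ = 1 - 2 * Q₁) (hQ₂ : inversiveForm K₂ K₃ = 1 - 2 * Q₂)
    (hQ₃ : inversiveForm K₃ K₁ = 1 - 2 * Q₃) :
    inversiveForm (inversiveCross K₁ K₂ K₃) (inversiveCross K₁ K₂ K₃)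
      = 4 * apolloniusU Q₁ Q₂ Q₃ := by
  rw [inversiveForm_inversiveCross_self, inversiveForm_comm K₂ K₁, inversiveForm_comm K₁ K₃,
    inversiveForm_comm K₃ K₂, h₁, h₂, h₃, hQ₁, hQ₂, hQ₃, det_gram_eq_apolloniusU]
  ring

theorem inversiveForm_isogonal (h₁ : inversiveForm K₁ K₁ = 1)
    (h₂ : inversiveForm K₂ K₂ = 1) (h₃ : inversiveForm K₃ K₃ = 1)
    (hQ₁ : inversiveForm K₁ K₂ = 1 - 2 * Q₁) (hQ₂ : inversiveForm K₂ K₃ = 1 - 2 * Q₂)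
    (hQ₃ : inversiveForm K₃ K₁ = 1 - 2 * Q₃) (hU : apolloniusU Q₁ Q₂ Q₃ ≠ 0) {t s : ℝ}
    (hs : s ^ 2 = 1 / 4 * apolloniusU Q₁ Q₂ Q₃ * (1 - t ^ 2) + Q₁ * Q₂ * Q₃ * t ^ 2)
    {K₀ : Fin 4 → ℝ} (hK₀ : K₀ = (apolloniusU Q₁ Q₂ Q₃)⁻¹ •
      (t • apolloniusPoint Q₁ Q₂ Q₃ K₁ K₂ K₃ + s • inversiveCross K₁ K₂ K₃)) :
    inversiveForm K₀ K₀ = 1 ∧ inversiveForm K₀ K₁ = t ∧ inversiveForm K₀ K₂ = t ∧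
      inversiveForm K₀ K₃ = t := by
  have hWN : inversiveForm (apolloniusPoint Q₁ Q₂ Q₃ K₁ K₂ K₃) (inversiveCross K₁ K₂ K₃) = 0 := by
    rw [inversiveForm_comm, inversiveForm_inversiveCross_apolloniusPoint]
  subst hK₀
  simp only [map_add, map_smul, LinearMap.add_apply, LinearMap.smul_apply, smul_eq_mul,
    inversiveForm_apolloniusPoint_first h₁ hQ₁ hQ₃,
    inversiveForm_apolloniusPoint_second h₂ hQ₁ hQ₂,
    inversiveForm_apolloniusPoint_third h₃ hQ₂ hQ₃,
    inversiveForm_apolloniusPoint_self h₁ h₂ h₃ hQ₁ hQ₂ hQ₃,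
    inversiveForm_inversiveCross_self_eq h₁ h₂ h₃ hQ₁ hQ₂ hQ₃, hWN,
    inversiveForm_inversiveCross_apolloniusPoint, inversiveForm_inversiveCross_first,
    inversiveForm_inversiveCross_second, inversiveForm_inversiveCross_third, mul_zero, add_zero]
  refine ⟨?_, ?_, ?_, ?_⟩
  · field_simp
    linear_combination (4 * apolloniusU Q₁ Q₂ Q₃) * hs
  all_goals field_simp

end Gram

theorem stmt_16_general
    (a₁ b₁ c₁ d₁ a₂ b₂ c₂ d₂ a₃ b₃ c₃ d₃ : ℝ)
    (h₁ : b₁^2 + c₁^2 - a₁*d₁ = 1)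
    (h₂ : b₂^2 + c₂^2 - a₂*d₂ = 1)
    (h₃ : b₃^2 + c₃^2 - a₃*d₃ = 1)
    (Q₁ Q₂ Q₃ : ℝ)
    (hQ₁ : 4*Q₁ = 2 + a₁*d₂ + a₂*d₁ - 2*(b₁*b₂ + c₁*c₂))
    (hQ₂ : 4*Q₂ = 2 + a₂*d₃ + a₃*d₂ - 2*(b₂*b₃ + c₂*c₃))
    (hQ₃ : 4*Q₃ = 2 + a₃*d₁ + a₁*d₃ - 2*(b₃*b₁ + c₃*c₁))
    (U : ℝ)
    (hU : U = Q₁*(Q₁-2*Q₂) + Q₂*(Q₂-2*Q₃) + Q₃*(Q₃-2*Q₁) + 4*Q₁*Q₂*Q₃)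
    (v₁ v₂ v₃ : ℝ)
    (hv₁ : v₁ = Q₁*(Q₁-Q₂-Q₃))
    (hv₂ : v₂ = Q₂*(Q₂-Q₃-Q₁))
    (hv₃ : v₃ = Q₃*(Q₃-Q₁-Q₂))
    (Δ₁ Δ₂ Δ₃ Δ₄ : ℝ)
    (hΔ₁ : Δ₁ = -Matrix.det !![b₁,c₁,d₁; b₂,c₂,d₂; b₃,c₃,d₃])
    (hΔ₂ : Δ₂ = -(1/2) * Matrix.det !![a₁,c₁,d₁; a₂,c₂,d₂; a₃,c₃,d₃])
    (hΔ₃ : Δ₃ = (1/2) * Matrix.det !![a₁,b₁,d₁; a₂,b₂,d₂; a₃,b₃,d₃])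
    (hΔ₄ : Δ₄ = Matrix.det !![a₁,b₁,c₁; a₂,b₂,c₂; a₃,b₃,c₃])
    (hU0 : U ≠ 0)
    (t : ℝ)
    (D : ℝ)
    (hD : D = (1/4)*U*(1-t^2) + Q₁*Q₂*Q₃*t^2)
    (hDpos : 0 ≤ D)
    (ε : ℝ) (hε : ε = 1 ∨ ε = -1)
    (a₀ b₀ c₀ d₀ : ℝ)
    (ha₀ : a₀ = (t*(a₁*v₂ + a₂*v₃ + a₃*v₁) + ε*Δ₄*Real.sqrt D)/U)
    (hb₀ : b₀ = (t*(b₁*v₂ + b₂*v₃ + b₃*v₁) + ε*Δ₂*Real.sqrt D)/U)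
    (hc₀ : c₀ = (t*(c₁*v₂ + c₂*v₃ + c₃*v₁) + ε*Δ₃*Real.sqrt D)/U)
    (hd₀ : d₀ = (t*(d₁*v₂ + d₂*v₃ + d₃*v₁) + ε*Δ₁*Real.sqrt D)/U) :
    b₀^2 + c₀^2 - a₀*d₀ = 1 ∧
    2*b₀*b₁ + 2*c₀*c₁ - a₀*d₁ - a₁*d₀ = 2*t ∧
    2*b₀*b₂ + 2*c₀*c₂ - a₀*d₂ - a₂*d₀ = 2*t ∧
    2*b₀*b₃ + 2*c₀*c₃ - a₀*d₃ - a₃*d₀ = 2*t := by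
  have hs : (ε * √D) ^ 2 = D := by
    rcases hε with rfl | rfl <;> simp [Real.sq_sqrt hDpos]
  obtain rfl : U = apolloniusU Q₁ Q₂ Q₃ := hU
  subst hv₁ hv₂ hv₃ hΔ₁ hΔ₂ hΔ₃ hΔ₄
  have hK₀ : ![a₀, b₀, c₀, d₀] = (apolloniusU Q₁ Q₂ Q₃)⁻¹ •
      (t • apolloniusPoint Q₁ Q₂ Q₃ ![a₁, b₁, c₁, d₁] ![a₂, b₂, c₂, d₂] ![a₃, b₃, c₃, d₃]
        + (ε * √D) • inversiveCross ![a₁, b₁, c₁, d₁] ![a₂, b₂, c₂, d₂] ![a₃, b₃, c₃, d₃]) := by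
    ext i
    fin_cases i <;>
      simp only [ha₀, hb₀, hc₀, hd₀, apolloniusPoint, apolloniusWeight, inversiveCross,
        Fin.isValue, Fin.reduceFinMk, Fin.zero_eta, Fin.mk_one, smul_cons, smul_eq_mul,
        smul_empty, add_cons, empty_add_empty, head_cons, tail_cons, cons_val_zero, cons_val_one,
        cons_val, Pi.smul_apply] <;> ring
  obtain ⟨e₀, e₁, e₂, e₃⟩ := inversiveForm_isogonal (K₁ := ![a₁, b₁, c₁, d₁])
    (K₂ := ![a₂, b₂, c₂, d₂]) (K₃ := ![a₃, b₃, c₃, d₃])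
    (by rw [inversiveForm_vecCons]; linear_combination h₁)
    (by rw [inversiveForm_vecCons]; linear_combination h₂)
    (by rw [inversiveForm_vecCons]; linear_combination h₃)
    (by rw [inversiveForm_vecCons]; linear_combination hQ₁ / 2)
    (by rw [inversiveForm_vecCons]; linear_combination hQ₂ / 2)
    (by rw [inversiveForm_vecCons]; linear_combination hQ₃ / 2) hU0 (hs.trans hD) hK₀
  rw [inversiveForm_vecCons] at e₀ e₁ e₂ e₃
  exact ⟨by linear_combination e₀, by linear_combination 2 * e₁, by linear_combination 2 * e₂,
    by linear_combination 2 * e₃⟩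

theorem stmt_16
    (a₁ b₁ c₁ d₁ a₂ b₂ c₂ d₂ a₃ b₃ c₃ d₃ : ℝ)
    (h₁ : b₁^2 + c₁^2 - a₁*d₁ = 1)
    (h₂ : b₂^2 + c₂^2 - a₂*d₂ = 1)
    (h₃ : b₃^2 + c₃^2 - a₃*d₃ = 1)
    (Q₁ Q₂ Q₃ : ℝ)
    (hQ₁ : 4*Q₁ = 2 + a₁*d₂ + a₂*d₁ - 2*(b₁*b₂ + c₁*c₂))
    (hQ₂ : 4*Q₂ = 2 + a₂*d₃ + a₃*d₂ - 2*(b₂*b₃ + c₂*c₃))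
    (hQ₃ : 4*Q₃ = 2 + a₃*d₁ + a₁*d₃ - 2*(b₃*b₁ + c₃*c₁))
    (U : ℝ)
    (hU : U = Q₁*(Q₁-2*Q₂) + Q₂*(Q₂-2*Q₃) + Q₃*(Q₃-2*Q₁) + 4*Q₁*Q₂*Q₃)
    (v₁ v₂ v₃ V : ℝ)
    (hv₁ : v₁ = Q₁*(Q₁-Q₂-Q₃))
    (hv₂ : v₂ = Q₂*(Q₂-Q₃-Q₁))
    (hv₃ : v₃ = Q₃*(Q₃-Q₁-Q₂))
    (hV : V = a₁*v₂ + a₂*v₃ + a₃*v₁)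
    (Δ₁ Δ₂ Δ₃ Δ₄ : ℝ)
    (hΔ₁ : Δ₁ = -Matrix.det !![b₁,c₁,d₁; b₂,c₂,d₂; b₃,c₃,d₃])
    (hΔ₂ : Δ₂ = -(1/2) * Matrix.det !![a₁,c₁,d₁; a₂,c₂,d₂; a₃,c₃,d₃])
    (hΔ₃ : Δ₃ = (1/2) * Matrix.det !![a₁,b₁,d₁; a₂,b₂,d₂; a₃,b₃,d₃])
    (hΔ₄ : Δ₄ = Matrix.det !![a₁,b₁,c₁; a₂,b₂,c₂; a₃,b₃,c₃])
    (hU0 : U ≠ 0)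
    (t : ℝ)
    (D : ℝ)
    (hD : D = (1/4)*U*(1-t^2) + Q₁*Q₂*Q₃*t^2)
    (hDpos : 0 ≤ D)
    (ε : ℝ) (hε : ε = 1 ∨ ε = -1)
    (a₀ b₀ c₀ d₀ : ℝ)
    (ha₀ : a₀ = (t*(a₁*v₂ + a₂*v₃ + a₃*v₁) + ε*Δ₄*Real.sqrt D)/U)
    (hb₀ : b₀ = (t*(b₁*v₂ + b₂*v₃ + b₃*v₁) + ε*Δ₂*Real.sqrt D)/U)
    (hc₀ : c₀ = (t*(c₁*v₂ + c₂*v₃ + c₃*v₁) + ε*Δ₃*Real.sqrt D)/U)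
    (hd₀ : d₀ = (t*(d₁*v₂ + d₂*v₃ + d₃*v₁) + ε*Δ₁*Real.sqrt D)/U) :
    b₀^2 + c₀^2 - a₀*d₀ = 1 ∧
    2*b₀*b₁ + 2*c₀*c₁ - a₀*d₁ - a₁*d₀ = 2*t ∧
    2*b₀*b₂ + 2*c₀*c₂ - a₀*d₂ - a₂*d₀ = 2*t ∧
    2*b₀*b₃ + 2*c₀*c₃ - a₀*d₃ - a₃*d₀ = 2*t :=
  stmt_16_general a₁ b₁ c₁ d₁ a₂ b₂ c₂ d₂ a₃ b₃ c₃ d₃ h₁ h₂ h₃ Q₁ Q₂ Q₃ hQ₁ hQ₂ hQ₃ U hU v₁ v₂ v₃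
    hv₁ hv₂ hv₃ Δ₁ Δ₂ Δ₃ Δ₄ hΔ₁ hΔ₂ hΔ₃ hΔ₄ hU0 t D hD hDpos ε hε a₀ b₀ c₀ d₀ ha₀ hb₀ hc₀ hd₀
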